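/- arXiv:1705.07795 — 5 statements merged into one kernel-verified Lean document; each statement's English description precedes it below -/
import Mathlib

section
/- Let f(x) = β·exp(x²/(2α)) for real α, β > 0. Then the Fenchel conjugate f*(y) = sup_x (xy − f(x)) satisfies f*(y) ≤ |y|·√(α·log(α·y²/β² + 1)) − β for all real y. -/
/-!
The function `g x = β * exp (x ^ 2 / (2 * α))` is even and convex, so `x * y - g x` is at most
`t * |y| - g t` with `t = |x|`. Take `s = √(α * log (α * y ^ 2 / β ^ 2 + 1))`: the elementary
bound `log (1 + u) ≥ u / (1 + u)` shows that the slope `g' s` is at least `|y|`. For `t ≤ s`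
we bound `t * |y|` by `s * |y|` and `g t` by `g 0 = β`; for `t ≥ s` the tangent line of `g`
at `s` gives `t * |y| - g t ≤ s * |y| - g s ≤ s * |y| - β`.
-/

open Real

lemma exp_sq_div_tangent_le {α : ℝ} (hα : 0 < α) (s t : ℝ) :
    exp (s ^ 2 / (2 * α)) * (1 + s * (t - s) / α) ≤ exp (t ^ 2 / (2 * α)) := by
  have hchord : s * (t - s) / α ≤ (t ^ 2 - s ^ 2) / (2 * α) := by
    rw [div_le_div_iff₀ hα (by positivity)]
    nlinarith [sq_nonneg (t - s)]
  calc exp (s ^ 2 / (2 * α)) * (1 + s * (t - s) / α)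
      ≤ exp (s ^ 2 / (2 * α)) * (1 + (t ^ 2 - s ^ 2) / (2 * α)) := by gcongr
    _ ≤ exp (s ^ 2 / (2 * α)) * exp ((t ^ 2 - s ^ 2) / (2 * α)) := by
      gcongr; rw [add_comm]; exact add_one_le_exp _
    _ = exp (t ^ 2 / (2 * α)) := by rw [← exp_add]; congr 1; ring

lemma abs_le_slope_exp_sq_div {α β : ℝ} (hα : 0 < α) (hβ : 0 < β) (y : ℝ) :
    |y| ≤ β * exp ((√(α * log (α * y ^ 2 / β ^ 2 + 1))) ^ 2 / (2 * α)) *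
      √(α * log (α * y ^ 2 / β ^ 2 + 1)) / α := by
  set u := α * y ^ 2 / β ^ 2 with hu_def
  set L := log (u + 1)
  have hu : 0 ≤ u := by positivity
  have hL : 0 ≤ L := log_nonneg (by linarith)
  have hLu : u ≤ (u + 1) * L := by
    simpa using self_sub_one_le_mul_log (show 0 ≤ u + 1 by linarith)
  have hexp : exp (L / 2) ^ 2 = u + 1 := by
    rw [← exp_nat_mul, Nat.cast_ofNat, mul_div_cancel₀ _ two_ne_zero, exp_log (by linarith)]
  have hexp_s : (√(α * L)) ^ 2 / (2 * α) = L / 2 := by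
    rw [sq_sqrt (by positivity)]; field_simp
  rw [hexp_s]
  refine abs_le_of_sq_le_sq ?_ (by positivity)
  rw [div_pow, mul_pow, mul_pow, hexp, sq_sqrt (by positivity), le_div_iff₀ (by positivity)]
  have hβu : β ^ 2 * u = α * y ^ 2 := by rw [hu_def]; field_simp
  calc y ^ 2 * α ^ 2 = α * (β ^ 2 * u) := by rw [hβu]; ring
    _ ≤ α * (β ^ 2 * ((u + 1) * L)) := by gcongr
    _ = β ^ 2 * (u + 1) * (α * L) := by ring

lemma mul_sub_exp_sq_div_le {α β : ℝ} (hα : 0 < α) (hβ : 0 < β) (y x : ℝ) :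
    x * y - β * exp (x ^ 2 / (2 * α)) ≤
      |y| * √(α * log (α * y ^ 2 / β ^ 2 + 1)) - β := by
  set s := √(α * log (α * y ^ 2 / β ^ 2 + 1))
  have hs : 0 ≤ s := sqrt_nonneg _
  have hβ_le (t : ℝ) : β ≤ β * exp (t ^ 2 / (2 * α)) :=
    le_mul_of_one_le_right hβ.le (one_le_exp (by positivity))
  have hslope := abs_le_slope_exp_sq_div hα hβ y
  have hxy : x * y ≤ |x| * |y| := (le_abs_self _).trans (abs_mul x y).le
  rcases le_total |x| s with hx | hx
  · have hxs : |x| * |y| ≤ s * |y| := by gcongr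
    linarith [hβ_le x]
  · have htangent := exp_sq_div_tangent_le hα s |x|
    rw [sq_abs] at htangent
    calc x * y - β * exp (x ^ 2 / (2 * α))
        ≤ |x| * |y| - β * exp (s ^ 2 / (2 * α)) * (1 + s * (|x| - s) / α) := by
          linarith [mul_le_mul_of_nonneg_left htangent hβ.le]
      _ = |x| * |y| - β * exp (s ^ 2 / (2 * α)) -
            β * exp (s ^ 2 / (2 * α)) * s / α * (|x| - s) := by ring
      _ ≤ |x| * |y| - β * exp (s ^ 2 / (2 * α)) - |y| * (|x| - s) := by
          gcongr
      _ ≤ |y| * s - β := by linarith [hβ_le s]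

theorem fenchel_conjugate_exp_bound (α β : ℝ) (hα : 0 < α) (hβ : 0 < β) (y : ℝ) :
    (⨆ x : ℝ, x * y - β * Real.exp (x ^ 2 / (2 * α))) ≤
      |y| * Real.sqrt (α * Real.log (α * y ^ 2 / β ^ 2 + 1)) - β :=
  ciSup_le fun x => mul_sub_exp_sq_div_le hα hβ y x
end

section
/- For all real x, log(1 + (exp(x) − 1)/(exp(x) + 1)) ≥ x/2 − x²/8. -/
open Real

lemma Real.log_cosh_le_sq_div_two (y : ℝ) : log (cosh y) ≤ y ^ 2 / 2 :=
  (log_le_iff_le_exp (cosh_pos y)).2 (cosh_le_exp_half_sq y)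

lemma Real.one_add_div_exp_add_one (x : ℝ) :
    1 + (exp x - 1) / (exp x + 1) = exp (x / 2) / cosh (x / 2) := by
  have hx : exp x = exp (x / 2) * exp (x / 2) := by rw [← exp_add, add_halves]
  rw [cosh_eq, hx, exp_neg]
  field_simp
  ring

theorem log_one_add_tanh_ge (x : ℝ) :
    Real.log (1 + (Real.exp x - 1) / (Real.exp x + 1)) ≥ x / 2 - x ^ 2 / 8 := by
  rw [Real.one_add_div_exp_add_one, Real.log_div (Real.exp_pos _).ne' (Real.cosh_pos _).ne',
    Real.log_exp]
  linarith [Real.log_cosh_le_sq_div_two (x / 2)]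
end

section
/- Fix L > 0, a ≥ 2, and reals θ_{t-1}, G_{t-1} with G_{t-1} ≥ L. Define β_t = (1/L)·(2σ(4θ_{t-1}/(a(G_{t-1}+L))) − 1), where σ(x) = 1/(1+e^{−x}). Then log(1 + L·β_t) ≥ 2θ_{t-1}/(a(G_{t-1}+L)) − 2θ_{t-1}²/(a²(G_{t-1}+L)²). -/
lemma aux_log_sigmoid (x : ℝ) :
    Real.log (1 + (2 * (1 / (1 + Real.exp (-x))) - 1)) ≥ x / 2 - x ^ 2 / 8 := by
  have hpos : 0 < 1 + Real.exp (-x) := by positivity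
  have h1 : 1 + (2 * (1 / (1 + Real.exp (-x))) - 1) = 2 / (1 + Real.exp (-x)) := by
    field_simp
    ring
  rw [h1]
  have hkey : 1 + Real.exp (-x) ≤ 2 * Real.exp (x ^ 2 / 8 - x / 2) := by
    have hc := Real.cosh_le_exp_half_sq (x / 2)
    rw [Real.cosh_eq] at hc
    have h2 : 0 < Real.exp (-(x / 2)) := Real.exp_pos _
    calc 1 + Real.exp (-x)
        = (Real.exp (x / 2) + Real.exp (-(x / 2))) * Real.exp (-(x / 2)) := by
          rw [add_mul, ← Real.exp_add, ← Real.exp_add]; ring_nf; rw [Real.exp_zero]; ring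
      _ ≤ 2 * Real.exp ((x / 2) ^ 2 / 2) * Real.exp (-(x / 2)) := by
          have : Real.exp (x / 2) + Real.exp (-(x / 2)) ≤ 2 * Real.exp ((x / 2) ^ 2 / 2) := by
            linarith
          exact mul_le_mul_of_nonneg_right this h2.le
      _ = 2 * Real.exp (x ^ 2 / 8 - x / 2) := by
          rw [mul_assoc, ← Real.exp_add]; ring_nf
  have hlog : Real.log (1 + Real.exp (-x)) ≤ Real.log 2 + (x ^ 2 / 8 - x / 2) := by
    calc Real.log (1 + Real.exp (-x)) ≤ Real.log (2 * Real.exp (x ^ 2 / 8 - x / 2)) :=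
          Real.log_le_log hpos hkey
      _ = Real.log 2 + (x ^ 2 / 8 - x / 2) := by
          rw [Real.log_mul (by norm_num) (Real.exp_ne_zero _), Real.log_exp]
  rw [Real.log_div (by norm_num) (ne_of_gt hpos)]
  linarith

theorem log_one_add_bet_fraction_bound (L a θ G : ℝ) (hL : 0 < L) (ha : 2 ≤ a)
    (hG : L ≤ G) :
    Real.log (1 + L * ((1 / L) *
        (2 * (1 / (1 + Real.exp (-(4 * θ / (a * (G + L)))))) - 1))) ≥
      2 * θ / (a * (G + L)) - 2 * θ ^ 2 / (a ^ 2 * (G + L) ^ 2) := by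
  have ha0 : (0 : ℝ) < a := by linarith
  have hGL : (0 : ℝ) < G + L := by linarith
  set x := 4 * θ / (a * (G + L)) with hx
  have hL' : L ≠ 0 := ne_of_gt hL
  have hsimp : L * ((1 / L) * (2 * (1 / (1 + Real.exp (-x))) - 1))
      = 2 * (1 / (1 + Real.exp (-x))) - 1 := by
    field_simp
  rw [hsimp]
  have h1 : 2 * θ / (a * (G + L)) = x / 2 := by
    rw [hx]; field_simp; ring
  have h2 : 2 * θ ^ 2 / (a ^ 2 * (G + L) ^ 2) = x ^ 2 / 8 := by
    rw [hx]; field_simp; ring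
  rw [h1, h2]
  exact aux_log_sigmoid x
end

section
/- Under the setup of the recurrence lemma with a = 2: let Wealth_0 = L and Wealth_t = Wealth_{t-1}·(1 + β_t g_t) where β_t = (1/L)(2σ(2θ_{t-1}/(G_{t-1}+L)) − 1). Then for all T ≥ 0, Wealth_T ≥ L·exp(θ_T²/(2L(G_T+L)) − ∑_{j=1}^T |g_j|/(2(G_{j-1}+L))). -/
/-!
Because `2σ(2z) - 1 = tanh z`, the bet multiplies the wealth by `1 + tanh (θ / D) * (g / L)`,
where `θ`, `D = G + L` are the statistics before the round. By induction one proves the stronger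
bound `log (W_t / L) ≥ Φ(θ_t, G_t + L) - ∑_{j ≤ t} |g_j| / (2 (G_{j-1} + L))` for the potential
`Φ(θ, D) = θ² / (2LD) + (θ / D)² / 2`; its second term is what lets the one-round estimate close.
For a round with `g ≥ 0` (the other sign follows by `θ ↦ -θ`), concavity of `log` and
`log cosh z ≤ z² / 2` give `log (1 + tanh z * g / L) ≥ (g / L) (z - z² / 2)`, and the increase of `Φ`
is bounded by this through a rational inequality that reduces to a quadratic in `D - θ` whose
discriminant condition is `(L - g)(D + g) ≥ 0`.
-/

open Real Finset

theorem two_mul_sigmoid_two_mul_sub_one (z : ℝ) : 2 * sigmoid (2 * z) - 1 = tanh z := by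
  have hz : exp (-(2 * z)) = exp (-z) / exp z := by
    rw [← exp_sub]; ring_nf
  rw [sigmoid_def, tanh_eq, hz]
  field_simp
  ring

theorem mul_log_one_add_le_log_one_add_mul {x t : ℝ} (hx₀ : 0 ≤ x) (hx₁ : x ≤ 1) (ht : -1 < t) :
    x * log (1 + t) ≤ log (1 + x * t) := by
  have ht' : 0 < 1 + t := by linarith
  rw [← log_rpow ht']
  exact log_le_log (rpow_pos_of_pos ht' x) (rpow_one_add_le_one_add_mul_self ht.le hx₀ hx₁)

theorem sub_sq_div_two_le_log_one_add_tanh (z : ℝ) : z - z ^ 2 / 2 ≤ log (1 + tanh z) := by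
  have h : 1 + tanh z = exp z / cosh z := by
    rw [tanh_eq_sinh_div_cosh, ← cosh_add_sinh]
    field_simp [(cosh_pos z).ne']
  have hcosh : log (cosh z) ≤ z ^ 2 / 2 :=
    (log_le_log (cosh_pos z) (cosh_le_exp_half_sq z)).trans_eq (log_exp _)
  rw [h, log_div (exp_pos z).ne' (cosh_pos z).ne', log_exp]
  linarith

theorem one_add_tanh_mul_pos (z : ℝ) {x : ℝ} (hx : |x| ≤ 1) : 0 < 1 + tanh z * x := by
  have h : |tanh z * x| < 1 := by
    rw [abs_mul]
    exact mul_lt_one_of_nonneg_of_lt_one_left (abs_nonneg _) (abs_tanh_lt_one z) hx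
  linarith [neg_abs_le (tanh z * x)]

noncomputable def cocobPotential (L θ D : ℝ) : ℝ := θ ^ 2 / (2 * L * D) + (θ / D) ^ 2 / 2

theorem cocobPotential_neg (L θ D : ℝ) : cocobPotential L (-θ) D = cocobPotential L θ D := by
  simp only [cocobPotential, neg_sq, neg_div]

theorem cocobPotential_step_le_of_nonneg {L D g : ℝ} (θ : ℝ) (hL : 0 < L) (hD : 0 < D)
    (hg₀ : 0 ≤ g) (hgL : g ≤ L) :
    cocobPotential L (θ + g) (D + g) - cocobPotential L θ D - g / (2 * D) ≤
      g / L * (θ / D - (θ / D) ^ 2 / 2) := by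
  -- after clearing denominators the gap is `g * P`, with `P` a quadratic in `u = D - θ`;
  -- completing the square shows `P ≥ 0`
  set u := D - θ
  set C := (2 * L - g) * (D + g) - L * g
  set P := C * u ^ 2 - 2 * L * D * (D + g) * u + L * D * (D + g) ^ 2
  have hC : L * D ≤ C := by
    have hdiscr : C - L * D = (L - g) * (D + g) := by ring
    have : 0 ≤ (L - g) * (D + g) := mul_nonneg (by linarith) (by linarith)
    linarith
  have hCP : C * P = (C * u - L * D * (D + g)) ^ 2 + L * D * (D + g) ^ 2 * (C - L * D) := by ring
  have hCP_nonneg : 0 ≤ C * P := by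
    rw [hCP]
    have := sub_nonneg.2 hC
    positivity
  have hP : 0 ≤ P := nonneg_of_mul_nonneg_right hCP_nonneg ((mul_pos hL hD).trans_le hC)
  have hgap : g / L * (θ / D - (θ / D) ^ 2 / 2) -
      (cocobPotential L (θ + g) (D + g) - cocobPotential L θ D - g / (2 * D)) =
      g * P / (2 * L * D ^ 2 * (D + g) ^ 2) := by
    have : θ = D - u := by ring
    rw [this]
    unfold cocobPotential
    field_simp
    ring
  have : 0 ≤ g * P / (2 * L * D ^ 2 * (D + g) ^ 2) := by positivity
  linarith

theorem cocobPotential_step_le_log {L D g : ℝ} (θ : ℝ) (hL : 0 < L) (hD : 0 < D) (hg : |g| ≤ L) :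
    cocobPotential L (θ + g) (D + |g|) - cocobPotential L θ D - |g| / (2 * D) ≤
      log (1 + tanh (θ / D) * (g / L)) := by
  wlog hg₀ : 0 ≤ g generalizing θ g
  · have h := this (-θ) (g := -g) (by rwa [abs_neg]) (by linarith)
    rwa [abs_neg, ← neg_add, cocobPotential_neg, cocobPotential_neg, neg_div, tanh_neg,
      neg_div, neg_mul_neg] at h
  rw [abs_of_nonneg hg₀] at hg ⊢
  calc _ ≤ g / L * (θ / D - (θ / D) ^ 2 / 2) := cocobPotential_step_le_of_nonneg θ hL hD hg₀ hg
    _ ≤ g / L * log (1 + tanh (θ / D)) :=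
      mul_le_mul_of_nonneg_left (sub_sq_div_two_le_log_one_add_tanh _) (by positivity)
    _ ≤ log (1 + g / L * tanh (θ / D)) :=
      mul_log_one_add_le_log_one_add_mul (by positivity) ((div_le_one hL).2 hg)
        (neg_one_lt_tanh _)
    _ = log (1 + tanh (θ / D) * (g / L)) := by rw [mul_comm]

theorem le_mul_exp_sub_sum {A : ℝ} (hA : 0 ≤ A) {W r Φ c : ℕ → ℝ} (h₀ : A * exp (Φ 0) ≤ W 0)
    (hW : ∀ t, W (t + 1) = W t * r (t + 1))
    (hr : ∀ t, exp (Φ (t + 1) - Φ t - c (t + 1)) ≤ r (t + 1)) (T : ℕ) :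
    A * exp (Φ T - ∑ j ∈ Icc 1 T, c j) ≤ W T := by
  induction T with
  | zero => simpa using h₀
  | succ T ih =>
    have hWT : 0 ≤ W T := (by positivity : 0 ≤ A * exp _).trans ih
    calc A * exp (Φ (T + 1) - ∑ j ∈ Icc 1 (T + 1), c j)
        = A * exp (Φ T - ∑ j ∈ Icc 1 T, c j) * exp (Φ (T + 1) - Φ T - c (T + 1)) := by
          rw [sum_Icc_succ_top (Nat.le_add_left 1 T), mul_assoc, ← exp_add]
          ring_nf
      _ ≤ W T * r (T + 1) := mul_le_mul ih (hr T) (exp_pos _).le hWT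
      _ = W (T + 1) := (hW T).symm

theorem cocob_wealth_lower_bound (L : ℝ) (hL : 0 < L)
    (g : ℕ → ℝ) (hg : ∀ t, |g t| ≤ L)
    (θ G : ℕ → ℝ)
    (hθ : ∀ t, θ t = ∑ j ∈ Finset.Icc 1 t, g j)
    (hG : ∀ t, G t = L + ∑ j ∈ Finset.Icc 1 t, |g j|)
    (β : ℕ → ℝ)
    (hβ : ∀ t, β t = (1 / L) *
      (2 * (1 / (1 + Real.exp (-(2 * θ (t - 1) / (G (t - 1) + L))))) - 1))
    (W : ℕ → ℝ) (hW0 : W 0 = L)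
    (hWt : ∀ t ≥ 1, W t = W (t - 1) * (1 + β t * g t))
    (T : ℕ) :
    W T ≥ L * Real.exp (θ T ^ 2 / (2 * L * (G T + L)) -
      ∑ j ∈ Finset.Icc 1 T, |g j| / (2 * (G (j - 1) + L))) := by
  have hθ_succ (t : ℕ) : θ (t + 1) = θ t + g (t + 1) := by
    rw [hθ, hθ, sum_Icc_succ_top (Nat.le_add_left 1 t)]
  have hG_succ (t : ℕ) : G (t + 1) + L = G t + L + |g (t + 1)| := by
    rw [hG, hG, sum_Icc_succ_top (Nat.le_add_left 1 t)]
    ring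
  have hD (t : ℕ) : 0 < G t + L := by
    have : 0 ≤ ∑ j ∈ Icc 1 t, |g j| := sum_nonneg fun j _ => abs_nonneg _
    linarith [hG t]
  have hβg (t : ℕ) : β (t + 1) * g (t + 1) = tanh (θ t / (G t + L)) * (g (t + 1) / L) := by
    rw [hβ, Nat.add_sub_cancel, mul_div_assoc, one_div (1 + _), ← sigmoid_def,
      two_mul_sigmoid_two_mul_sub_one]
    ring
  have hstep (t : ℕ) : exp (cocobPotential L (θ (t + 1)) (G (t + 1) + L) -
      cocobPotential L (θ t) (G t + L) - |g (t + 1)| / (2 * (G (t + 1 - 1) + L))) ≤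
      1 + β (t + 1) * g (t + 1) := by
    have hx : |g (t + 1) / L| ≤ 1 := by
      rw [abs_div, abs_of_pos hL]
      exact (div_le_one hL).2 (hg _)
    rw [hβg, ← le_log_iff_exp_le (one_add_tanh_mul_pos _ hx), hθ_succ, hG_succ,
      Nat.add_sub_cancel]
    exact cocobPotential_step_le_log _ hL (hD t) (hg _)
  have hbound := le_mul_exp_sub_sum hL.le (W := W) (r := fun t => 1 + β t * g t)
    (Φ := fun t => cocobPotential L (θ t) (G t + L)) (c := fun j => |g j| / (2 * (G (j - 1) + L)))
    (by simp [hW0, hθ 0, cocobPotential])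
    (fun t => hWt (t + 1) (Nat.le_add_left 1 t)) hstep T
  refine le_trans ?_ hbound
  gcongr
  exact le_add_of_nonneg_right (by positivity)
end

section
/- Let L > 0, θ ∈ ℝ, G ≥ L, and H(x) = L·exp(x²/(2L(G+L)) − c) with constant c ≤ (1/2)ln(G/L) satisfied by c = (1/2)ln(G/L). Then the Fenchel conjugate satisfies H*(w) ≤ |w|·√(L(G+L)·ln(1 + (G+L)²·w²/L²)) for all w ∈ ℝ. -/
/-!
Writing `H x = β * exp (x ^ 2 / (2 * α))` with `α = L (G + L)` and `β = L / √(G / L)`, take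
`s = √(α log (1 + u))`, so that `exp (s ^ 2 / (2 α)) = √(1 + u)`. Convexity of `H` puts `H` above
its tangent at `s`, whose slope `β s √(1 + u) / α` is at least `|w|` as soon as
`α w² / β² ≤ u ≤ (1 + u) log (1 + u)`. Hence `x w - H x ≤ s |w|` for every `x`, and
`u = (G + L)² w² / L²` qualifies since `α w² / β² = (G + L) G w² / L²`.
-/

open Real

lemma le_one_add_mul_log_one_add {u : ℝ} (hu : 0 ≤ u) : u ≤ (1 + u) * log (1 + u) := by
  have h := one_sub_inv_le_log_of_pos (by linarith : (0 : ℝ) < 1 + u)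
  calc u = (1 + u) * (1 - (1 + u)⁻¹) := by field_simp; ring
    _ ≤ (1 + u) * log (1 + u) := by gcongr

lemma exp_sq_div_mul_le_exp_sq_div {α : ℝ} (hα : 0 < α) (s t : ℝ) :
    exp (s ^ 2 / (2 * α)) * (s * (t - s) / α) ≤ exp (t ^ 2 / (2 * α)) := by
  have hchord : s * (t - s) / α ≤ (t ^ 2 - s ^ 2) / (2 * α) := by
    rw [div_le_div_iff₀ hα (by positivity)]
    nlinarith [sq_nonneg (t - s)]
  calc exp (s ^ 2 / (2 * α)) * (s * (t - s) / α)
      ≤ exp (s ^ 2 / (2 * α)) * ((t ^ 2 - s ^ 2) / (2 * α) + 1) := by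
        gcongr; linarith
    _ ≤ exp (s ^ 2 / (2 * α)) * exp ((t ^ 2 - s ^ 2) / (2 * α)) := by
        gcongr; exact add_one_le_exp _
    _ = exp (t ^ 2 / (2 * α)) := by rw [← exp_add]; ring_nf

lemma mul_sub_mul_exp_sq_div_le {α β s y : ℝ} (hα : 0 < α) (hβ : 0 ≤ β)
    (hslope : α * |y| ≤ β * s * exp (s ^ 2 / (2 * α))) (x : ℝ) :
    x * y - β * exp (x ^ 2 / (2 * α)) ≤ s * |y| := by
  have hxy : x * y ≤ |x| * |y| := (le_abs_self _).trans (abs_mul x y).le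
  suffices (|x| - s) * |y| ≤ β * exp (x ^ 2 / (2 * α)) by linarith
  rcases le_total |x| s with hxs | hsx
  · have : (|x| - s) * |y| ≤ 0 := mul_nonpos_of_nonpos_of_nonneg (by linarith) (abs_nonneg y)
    exact this.trans (by positivity)
  · have hy : |y| ≤ β * s * exp (s ^ 2 / (2 * α)) / α := by rwa [le_div_iff₀ hα, mul_comm]
    calc (|x| - s) * |y| ≤ (|x| - s) * (β * s * exp (s ^ 2 / (2 * α)) / α) := by
          gcongr
      _ = β * (exp (s ^ 2 / (2 * α)) * (s * (|x| - s) / α)) := by ring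
      _ ≤ β * exp (|x| ^ 2 / (2 * α)) := by
          gcongr; exact exp_sq_div_mul_le_exp_sq_div hα s |x|
      _ = β * exp (x ^ 2 / (2 * α)) := by rw [sq_abs]

lemma iSup_mul_sub_mul_exp_sq_div_le {α β y u : ℝ} (hα : 0 < α) (hβ : 0 < β)
    (hu : α * y ^ 2 / β ^ 2 ≤ u) :
    ⨆ x : ℝ, x * y - β * exp (x ^ 2 / (2 * α)) ≤ |y| * √(α * log (1 + u)) := by
  have hu₀ : 0 ≤ u := (by positivity : 0 ≤ α * y ^ 2 / β ^ 2).trans hu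
  set s := √(α * log (1 + u))
  have hlog : 0 ≤ log (1 + u) := log_nonneg (by linarith)
  have hs_sq : s ^ 2 = α * log (1 + u) := sq_sqrt (by positivity)
  have hexp : exp (s ^ 2 / (2 * α)) = √(1 + u) := by
    rw [hs_sq, show α * log (1 + u) / (2 * α) = log (1 + u) / 2 by field_simp, exp_half,
      exp_log (by linarith)]
  have hslope : α * |y| ≤ β * s * exp (s ^ 2 / (2 * α)) := by
    rw [hexp, ← pow_le_pow_iff_left₀ (by positivity) (by positivity) two_ne_zero, mul_pow,
      sq_abs, mul_pow, mul_pow, hs_sq, sq_sqrt (by linarith)]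
    have hy : α * y ^ 2 ≤ u * β ^ 2 := (div_le_iff₀ (by positivity)).1 hu
    have hlog_u := le_one_add_mul_log_one_add hu₀
    calc α ^ 2 * y ^ 2 = α * (α * y ^ 2) := by ring
      _ ≤ α * (u * β ^ 2) := by gcongr
      _ ≤ α * ((1 + u) * log (1 + u) * β ^ 2) := by gcongr
      _ = β ^ 2 * (α * log (1 + u)) * (1 + u) := by ring
  refine ciSup_le fun x => ?_
  rw [mul_comm |y|]
  exact mul_sub_mul_exp_sq_div_le hα hβ.le hslope x

theorem cocob_conjugate_bound (L G : ℝ) (hL : 0 < L) (hG : L ≤ G) (w : ℝ) :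
    (⨆ x : ℝ, x * w -
        L * Real.exp (x ^ 2 / (2 * L * (G + L)) - (1 / 2) * Real.log (G / L))) ≤
      |w| * Real.sqrt (L * (G + L) * Real.log (1 + (G + L) ^ 2 * w ^ 2 / L ^ 2)) := by
  have hG₀ : 0 < G := hL.trans_le hG
  have hH (x : ℝ) : L * exp (x ^ 2 / (2 * L * (G + L)) - (1 / 2) * log (G / L)) =
      L / √(G / L) * exp (x ^ 2 / (2 * (L * (G + L)))) := by
    rw [exp_sub, show 1 / 2 * log (G / L) = log (G / L) / 2 by ring, exp_half,
      exp_log (by positivity), mul_assoc 2]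
    ring
  have hu : L * (G + L) * w ^ 2 / (L / √(G / L)) ^ 2 ≤ (G + L) ^ 2 * w ^ 2 / L ^ 2 := by
    rw [div_pow, sq_sqrt (by positivity), div_le_div_iff₀ (by positivity) (by positivity)]
    field_simp
    gcongr
    linarith
  simp_rw [hH]
  exact iSup_mul_sub_mul_exp_sq_div_le (by positivity) (by positivity) hu
end
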